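/- Let γ > 0 and M ∈ ℕ, and let (a_{nm})_{n,m ∈ ℕ} be real numbers with |a_{nm}| ≤ S for all n,m and |a_{nm}| ≤ 2^{-γ|m-n|} S whenever |m−n| ≥ M+1, where S ≥ 0. If moreover Σ_{n,m=1}^{N} a_{nm} = 2N·D + o(N) as N → ∞ for some D ≥ 0, then D ≤ S·(M + 1/(2^γ − 1) + 1/2) ; in particular S ≥ c D for some constant c > 0 depending only on γ and M. -/

import Mathlib

/-!
With `r = 2^(-γ)`, every row of `|a|` sums to at most `S (2M + 1) + 2 S r / (1 - r)`: at most
`2M + 1` entries lie within distance `M` of the diagonal, and the remaining ones are dominated by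
two geometric series. Hence every `N × N` block sum is at most `N (S (2M + 1) + 2 S r / (1 - r))`,
while by hypothesis it is `2 N D + o(N)`; dividing by `N` and letting `N → ∞` gives the bound,
as `r / (1 - r) = 1 / (2^γ - 1)`.
-/

open Filter Finset Topology

lemma Nat.cast_dist_eq_abs_sub (n m : ℕ) : (Nat.dist n m : ℝ) = |(m : ℝ) - n| := by
  rcases le_total n m with h | h
  · rw [Nat.dist_eq_sub_of_le h, Nat.cast_sub h, abs_of_nonneg (by simpa using h)]
  · rw [Nat.dist_eq_sub_of_le_right h, Nat.cast_sub h, abs_of_nonpos (by simpa using h), neg_sub]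

lemma card_filter_dist_le (s : Finset ℕ) (n M : ℕ) :
    #(s.filter fun m => Nat.dist n m ≤ M) ≤ 2 * M + 1 := by
  calc #(s.filter fun m => Nat.dist n m ≤ M) ≤ #(Icc (n - M) (n + M)) := by
        refine card_le_card fun m hm => ?_
        have := (mem_filter.1 hm).2
        unfold Nat.dist at this
        simp only [mem_Icc]
        omega
    _ ≤ 2 * M + 1 := by rw [Nat.card_Icc]; omega

section Geometric

variable {r : ℝ}

lemma sum_pow_le_of_injOn (hr0 : 0 ≤ r) (hr1 : r < 1) {ι : Type*} {t : Finset ι} {f : ι → ℕ}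
    (hf : Set.InjOn f t) (hpos : ∀ i ∈ t, f i ≠ 0) : ∑ i ∈ t, r ^ f i ≤ r / (1 - r) := by
  rw [← sum_image hf]
  have h0 : 0 ∉ t.image f := by simpa using hpos
  have := (summable_geometric_of_lt_one hr0 hr1).sum_le_tsum (insert 0 (t.image f))
    (fun k _ => pow_nonneg hr0 k)
  rw [sum_insert h0, tsum_geometric_of_lt_one hr0 hr1, pow_zero] at this
  calc ∑ k ∈ t.image f, r ^ k ≤ (1 - r)⁻¹ - 1 := by linarith
    _ = r / (1 - r) := by field_simp [(sub_pos.2 hr1).ne']; ring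

lemma sum_erase_pow_dist_le (hr0 : 0 ≤ r) (hr1 : r < 1) (s : Finset ℕ) (n : ℕ) :
    ∑ m ∈ s.erase n, r ^ Nat.dist n m ≤ 2 * (r / (1 - r)) := by
  rw [← sum_filter_add_sum_filter_not _ (· < n), two_mul]
  refine add_le_add (sum_pow_le_of_injOn hr0 hr1 ?_ ?_) (sum_pow_le_of_injOn hr0 hr1 ?_ ?_)
  all_goals
    simp only [Set.InjOn, coe_filter, mem_erase, Set.mem_ofPred_eq, mem_filter, Nat.dist]
    omega

variable {S : ℝ} {M : ℕ}

lemma sum_abs_le_of_exp_decay (hr0 : 0 ≤ r) (hr1 : r < 1) {a : ℕ → ℝ} {n : ℕ}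
    (hbd : ∀ m, |a m| ≤ S) (hfar : ∀ m, M < Nat.dist n m → |a m| ≤ S * r ^ Nat.dist n m)
    (s : Finset ℕ) :
    ∑ m ∈ s, |a m| ≤ S * (2 * M + 1) + S * (2 * (r / (1 - r))) := by
  have hS : 0 ≤ S := (abs_nonneg _).trans (hbd 0)
  rw [← sum_filter_add_sum_filter_not _ fun m => Nat.dist n m ≤ M]
  refine add_le_add ?near ?far
  case near =>
    calc _ ≤ #(s.filter fun m => Nat.dist n m ≤ M) • S := sum_le_card_nsmul _ _ _ fun m _ => hbd m
      _ ≤ S * (2 * M + 1) := by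
        rw [nsmul_eq_mul, mul_comm]
        gcongr
        exact_mod_cast card_filter_dist_le s n M
  case far =>
    calc _ ≤ ∑ m ∈ s.filter (fun m => ¬Nat.dist n m ≤ M), S * r ^ Nat.dist n m :=
          sum_le_sum fun m hm => hfar m (not_le.1 (mem_filter.1 hm).2)
      _ ≤ ∑ m ∈ s.erase n, S * r ^ Nat.dist n m := by
          refine sum_le_sum_of_subset_of_nonneg (fun m hm => ?_) fun m _ _ => by positivity
          simp only [mem_filter, mem_erase] at hm ⊢
          refine ⟨fun h => hm.2 ?_, hm.1⟩
          simp [h]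
      _ ≤ S * (2 * (r / (1 - r))) := by
          rw [← mul_sum]
          exact mul_le_mul_of_nonneg_left (sum_erase_pow_dist_le hr0 hr1 s n) hS

end Geometric

lemma le_of_isLittleO_sub_mul {u : ℕ → ℝ} {C D : ℝ} (hu : ∀ N, u N ≤ N * C)
    (h : (fun N => u N - N * D) =o[atTop] fun N => (N : ℝ)) : D ≤ C := by
  have hlim : Tendsto (fun N : ℕ => u N / N) atTop (𝓝 D) := by
    have := h.tendsto_div_nhds_zero.add_const D
    rw [zero_add] at this
    refine this.congr' ?_
    filter_upwards [eventually_ne_atTop 0] with N hN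
    field_simp
    ring
  refine le_of_tendsto hlim ?_
  filter_upwards [eventually_gt_atTop 0] with N hN
  rw [div_le_iff₀ (by positivity), mul_comm]
  exact hu N

theorem stmt3_general (γ : ℝ) (hγ : 0 < γ) (M : ℕ) (a : ℕ → ℕ → ℝ) (S D : ℝ)
    (hbd : ∀ n m, |a n m| ≤ S)
    (hdecay : ∀ n m : ℕ, (M : ℝ) + 1 ≤ |(m : ℝ) - (n : ℝ)| →
      |a n m| ≤ (2 : ℝ) ^ (-γ * |(m : ℝ) - (n : ℝ)|) * S)
    (hsum : (fun N : ℕ => (∑ n ∈ Finset.Icc 1 N, ∑ m ∈ Finset.Icc 1 N, a n m) - 2 * N * D)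
      =o[atTop] fun N : ℕ => (N : ℝ)) :
    D ≤ S * ((M : ℝ) + 1 / ((2 : ℝ) ^ γ - 1) + 1/2) := by
  set r : ℝ := (2 : ℝ) ^ (-γ)
  have hr0 : 0 ≤ r := by positivity
  have hr1 : r < 1 := Real.rpow_lt_one_of_one_lt_of_neg one_lt_two (neg_neg_of_pos hγ)
  have hr : r / (1 - r) = 1 / ((2 : ℝ) ^ γ - 1) := by
    have h2γ : 1 < (2 : ℝ) ^ γ := Real.one_lt_rpow one_lt_two hγ
    rw [show r = ((2 : ℝ) ^ γ)⁻¹ from Real.rpow_neg zero_le_two γ]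
    field_simp [(sub_pos.2 h2γ).ne']
  have hfar (n m : ℕ) (h : M < Nat.dist n m) : |a n m| ≤ S * r ^ Nat.dist n m := by
    have hd : (M : ℝ) + 1 ≤ |(m : ℝ) - n| := by
      rw [← Nat.cast_dist_eq_abs_sub]
      exact_mod_cast h
    rw [mul_comm, ← Real.rpow_natCast, ← Real.rpow_mul zero_le_two, Nat.cast_dist_eq_abs_sub]
    exact hdecay n m hd
  have hblock (N : ℕ) : ∑ n ∈ Icc 1 N, ∑ m ∈ Icc 1 N, a n m ≤
      N * (2 * (S * ((M : ℝ) + 1 / ((2 : ℝ) ^ γ - 1) + 1/2))) := by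
    calc _ ≤ ∑ n ∈ Icc 1 N, ∑ m ∈ Icc 1 N, |a n m| :=
          sum_le_sum fun n _ => sum_le_sum fun m _ => le_abs_self _
      _ ≤ #(Icc 1 N) • (S * (2 * M + 1) + S * (2 * (r / (1 - r)))) :=
          sum_le_card_nsmul _ _ _ fun n _ =>
            sum_abs_le_of_exp_decay hr0 hr1 (hbd n) (hfar n) _
      _ = _ := by rw [Nat.card_Icc, nsmul_eq_mul, hr]; push_cast; ring
  have := le_of_isLittleO_sub_mul (D := 2 * D) hblock (hsum.congr_left fun N => by ring)
  linarith

theorem stmt3 (γ : ℝ) (hγ : 0 < γ) (M : ℕ) (a : ℕ → ℕ → ℝ) (S D : ℝ)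
    (hS : 0 ≤ S) (hD : 0 ≤ D)
    (hbd : ∀ n m, |a n m| ≤ S)
    (hdecay : ∀ n m : ℕ, (M : ℝ) + 1 ≤ |(m : ℝ) - (n : ℝ)| →
      |a n m| ≤ (2 : ℝ) ^ (-γ * |(m : ℝ) - (n : ℝ)|) * S)
    (hsum : (fun N : ℕ => (∑ n ∈ Finset.Icc 1 N, ∑ m ∈ Finset.Icc 1 N, a n m) - 2 * N * D)
      =o[atTop] fun N : ℕ => (N : ℝ)) :
    D ≤ S * ((M : ℝ) + 1 / ((2 : ℝ) ^ γ - 1) + 1/2) :=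
  stmt3_general γ hγ M a S D hbd hdecay hsum
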